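/- For any three distinct propositional variables p, q, s, the formula (◇◇p ∧ ¬◇p ∧ ¬◇◇◇p) → ((◇◇s ∧ ¬◇s) → ¬(◇(q ∧ ◇s) ∧ ◇(¬q ∧ ◇s))) is wK4-valid, i.e., it is true at every point of every model based on a weakly transitive frame. -/

import Mathlib

/-- Modal formulas built from propositional variables (indexed by ℕ),
constants ⊤, ⊥, negation, conjunction and the modal operator ◇. -/
inductive MF : Type where
  | var : ℕ → MF
  | top : MF
  | bot : MF
  | neg : MF → MF
  | and : MF → MF → MF
  | dia : MF → MF
deriving DecidableEq

namespace MF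

/-- Disjunction, as an abbreviation. -/
def or (a b : MF) : MF := neg (and (neg a) (neg b))

/-- Implication, as an abbreviation. -/
def imp (a b : MF) : MF := MF.or (neg a) b

/-- Box, as an abbreviation: □φ := ¬◇¬φ. -/
def box (a : MF) : MF := neg (dia (neg a))

/-- The (finite) set of propositional variables occurring in a formula. -/
def sig : MF → Finset ℕ
  | var n => {n}
  | top => ∅
  | bot => ∅
  | neg a => a.sig
  | and a b => a.sig ∪ b.sig
  | dia a => a.sig

/-- The set of subformulas of a formula. -/
def subf : MF → Finset MF
  | var n => {var n}
  | top => {top}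
  | bot => {bot}
  | neg a => insert (neg a) (subf a)
  | and a b => insert (and a b) (subf a ∪ subf b)
  | dia a => insert (dia a) (subf a)

/-- The number of subformulas of a formula. -/
def nsub (a : MF) : ℕ := (subf a).card

end MF

/-- A Kripke model: a binary (accessibility) relation on worlds together with
a valuation assigning to each propositional variable a set of worlds. -/
structure KModel (W : Type) where
  R : W → W → Prop
  val : ℕ → W → Prop

/-- Weak transitivity: xRy and yRz imply x = z or xRz. -/
def WTrans {W : Type} (R : W → W → Prop) : Prop :=
  ∀ x y z : W, R x y → R y z → x = z ∨ R x z

/-- The usual Kripke truth relation. -/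
def Sat {W : Type} (M : KModel W) : W → MF → Prop
  | x, .var n => M.val n x
  | _, .top => True
  | _, .bot => False
  | x, .neg a => ¬ Sat M x a
  | x, .and a b => Sat M x a ∧ Sat M x b
  | x, .dia a => ∃ y, M.R x y ∧ Sat M y a

/-- wK4-validity: truth at every point of every model based on a weakly
transitive frame. -/
def WK4Valid (φ : MF) : Prop :=
  ∀ (W : Type) (M : KModel W), WTrans M.R → ∀ x : W, Sat M x φ

/-- The cluster of a point x: C(x) = {x} ∪ {y | xRy and yRx}. -/
def cluster {W : Type} (R : W → W → Prop) (x : W) : Set W :=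
  {x} ∪ {y | R x y ∧ R y x}

/-- C R C' for sets of points: xRy for some x ∈ C, y ∈ C'. -/
def clusterRel {W : Type} (R : W → W → Prop) (C C' : Set W) : Prop :=
  ∃ x ∈ C, ∃ y ∈ C', R x y

/-- C R y for a set C and point y: xRy for some x ∈ C. -/
def clusterRelPt {W : Type} (R : W → W → Prop) (C : Set W) (y : W) : Prop :=
  ∃ x ∈ C, R x y

/-- C R^s C': C R C' and C ≠ C'. -/
def clusterRelS {W : Type} (R : W → W → Prop) (C C' : Set W) : Prop :=
  clusterRel R C C' ∧ C ≠ C'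

/-- A set is a cluster if it is the cluster of some point. -/
def IsCluster {W : Type} (R : W → W → Prop) (C : Set W) : Prop :=
  ∃ x : W, C = cluster R x

/-- A σ-model is descriptive if it satisfies (dif), (ref) and (com). -/
def Descriptive {W : Type} (σ : Finset ℕ) (M : KModel W) : Prop :=
  (∀ x y : W, (∀ φ : MF, φ.sig ⊆ σ → (Sat M x φ ↔ Sat M y φ)) → x = y) ∧
  (∀ x y : W, M.R x y ↔ ∀ χ : MF, χ.sig ⊆ σ → Sat M y χ → Sat M x (MF.dia χ)) ∧
  (∀ Γ : Set MF, (∀ φ ∈ Γ, φ.sig ⊆ σ) →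
    (∀ Γ' : Finset MF, ↑Γ' ⊆ Γ → ∃ x : W, ∀ φ ∈ Γ', Sat M x φ) →
    ∃ x : W, ∀ φ ∈ Γ, Sat M x φ)

/-- The ρ-type of a point: the set of all ρ-formulas true at it. -/
def rType {W : Type} (M : KModel W) (ρ : Finset ℕ) (x : W) : Set MF :=
  {φ : MF | φ.sig ⊆ ρ ∧ Sat M x φ}

/-- A cluster C is ρ-maximal if whenever C R y and some x ∈ C has the same
ρ-type as y, then y ∈ C. -/
def RhoMaximal {W : Type} (M : KModel W) (ρ : Finset ℕ) (C : Set W) : Prop :=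
  ∀ x ∈ C, ∀ y : W, clusterRelPt M.R C y → rType M ρ x = rType M ρ y → y ∈ C

/-- β is a ρ-bisimulation between M1 and M2: conditions (atom) and (move). -/
def IsBisim {W1 W2 : Type} (ρ : Finset ℕ) (M1 : KModel W1) (M2 : KModel W2)
    (β : W1 → W2 → Prop) : Prop :=
  ∀ x1 x2, β x1 x2 →
    (∀ n ∈ ρ, M1.val n x1 ↔ M2.val n x2) ∧
    (∀ y1, M1.R x1 y1 → ∃ y2, M2.R x2 y2 ∧ β y1 y2) ∧
    (∀ y2, M2.R x2 y2 → ∃ y1, M1.R x1 y1 ∧ β y1 y2)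

/-- M1,x1 ∼ρ M2,x2 : some ρ-bisimulation relates x1 to x2. -/
def Bisimilar {W1 W2 : Type} (ρ : Finset ℕ) (M1 : KModel W1) (x1 : W1)
    (M2 : KModel W2) (x2 : W2) : Prop :=
  ∃ β : W1 → W2 → Prop, IsBisim ρ M1 M2 β ∧ β x1 x2

/-! Let x satisfy the antecedents. Weak transitivity forces every two-step path out of x
either to return to x or to be short-cut by a single step; since ¬◇p holds at x, the path
witnessing ◇◇p returns, so p holds at x. Likewise ¬◇s at x forces every successor of x
seeing an s-point to see x back. The two successors u (with q) and v (with ¬q) are then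
distinct points of the cluster of x, so u R v, and x R u R v R x witnesses ◇◇◇p at x. -/

theorem WTrans.eq_of_not_rel {W : Type} {R : W → W → Prop} (hR : WTrans R) {x y z : W}
    (hxy : R x y) (hyz : R y z) (hxz : ¬ R x z) : x = z :=
  (hR x y z hxy hyz).resolve_right hxz

theorem WTrans.rel_of_ne {W : Type} {R : W → W → Prop} (hR : WTrans R) {x y z : W}
    (hxy : R x y) (hyz : R y z) (hxz : x ≠ z) : R x z :=
  (hR x y z hxy hyz).resolve_left hxz

section Sat

variable {W : Type} (M : KModel W) (x : W) (φ ψ : MF)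

@[simp] theorem sat_neg : Sat M x (.neg φ) ↔ ¬ Sat M x φ := Iff.rfl

@[simp] theorem sat_and : Sat M x (.and φ ψ) ↔ Sat M x φ ∧ Sat M x ψ := Iff.rfl

@[simp] theorem sat_imp : Sat M x (.imp φ ψ) ↔ (Sat M x φ → Sat M x ψ) := by
  simp only [MF.imp, MF.or, sat_neg, sat_and, not_and, not_not]

end Sat

variable {W : Type} {M : KModel W} {x : W} {φ : MF}

theorem sat_of_dia_dia_of_not_dia (hR : WTrans M.R) (h2 : Sat M x (.dia (.dia φ)))
    (h1 : ¬ Sat M x (.dia φ)) : Sat M x φ := by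
  obtain ⟨y, hxy, z, hyz, hz⟩ := h2
  obtain rfl : x = z := hR.eq_of_not_rel hxy hyz fun hxz => h1 ⟨z, hxz, hz⟩
  exact hz

theorem rel_back_of_sat_dia_of_not_dia (hR : WTrans M.R) {u : W} (hxu : M.R x u)
    (hu : Sat M u (.dia φ)) (hx : ¬ Sat M x (.dia φ)) : M.R u x := by
  obtain ⟨w, huw, hw⟩ := hu
  obtain rfl : x = w := hR.eq_of_not_rel hxu huw fun hxw => hx ⟨w, hxw, hw⟩
  exact huw

theorem sat_dia_dia_dia_of_ne (hR : WTrans M.R) (hx : Sat M x φ) {u v : W}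
    (hxu : M.R x u) (hux : M.R u x) (hxv : M.R x v) (hvx : M.R v x) (huv : u ≠ v) :
    Sat M x (.dia (.dia (.dia φ))) :=
  ⟨u, hxu, v, hR.rel_of_ne hux hxv huv, x, hvx, hx⟩

theorem stmt6_general (p q s : ℕ) :
    WK4Valid (MF.imp
      (MF.and (MF.dia (MF.dia (MF.var p)))
        (MF.and (MF.neg (MF.dia (MF.var p)))
          (MF.neg (MF.dia (MF.dia (MF.dia (MF.var p)))))))
      (MF.imp
        (MF.and (MF.dia (MF.dia (MF.var s))) (MF.neg (MF.dia (MF.var s))))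
        (MF.neg (MF.and
          (MF.dia (MF.and (MF.var q) (MF.dia (MF.var s))))
          (MF.dia (MF.and (MF.neg (MF.var q)) (MF.dia (MF.var s)))))))) := by
  intro W M hR x
  simp only [sat_imp, sat_and, sat_neg]
  rintro ⟨h2p, hnp, hn3p⟩ ⟨-, hns⟩ ⟨⟨u, hxu, hq, hus⟩, ⟨v, hxv, hnq, hvs⟩⟩
  have hux := rel_back_of_sat_dia_of_not_dia hR hxu hus hns
  have hvx := rel_back_of_sat_dia_of_not_dia hR hxv hvs hns
  have huv : u ≠ v := by
    rintro rfl
    exact hnq hq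
  have hxp := sat_of_dia_dia_of_not_dia hR h2p hnp
  exact hn3p (sat_dia_dia_dia_of_ne hR hxp hxu hux hxv hvx huv)

/-- (◇◇p ∧ ¬◇p ∧ ¬◇◇◇p) → ((◇◇s ∧ ¬◇s) → ¬(◇(q ∧ ◇s) ∧ ◇(¬q ∧ ◇s))) is
wK4-valid, for pairwise distinct variables p, q, s. -/
theorem stmt6 (p q s : ℕ) (hpq : p ≠ q) (hps : p ≠ s) (hqs : q ≠ s) :
    WK4Valid (MF.imp
      (MF.and (MF.dia (MF.dia (MF.var p)))
        (MF.and (MF.neg (MF.dia (MF.var p)))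
          (MF.neg (MF.dia (MF.dia (MF.dia (MF.var p)))))))
      (MF.imp
        (MF.and (MF.dia (MF.dia (MF.var s))) (MF.neg (MF.dia (MF.var s))))
        (MF.neg (MF.and
          (MF.dia (MF.and (MF.var q) (MF.dia (MF.var s))))
          (MF.dia (MF.and (MF.neg (MF.var q)) (MF.dia (MF.var s)))))))) :=
  stmt6_general p q s
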